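/- arXiv:1610.06489 — 4 statements merged into one kernel-verified Lean document; each statement's English description precedes it below -/
import Mathlib

section
/- Let R be a commutative ring, G a group, H a subgroup of finite index, and T = {t₁,…,t_{[G:H]}} a complete set of left coset representatives of H in G. For every A ∈ Mat(m, RG) there exists a unique L_T(A) ∈ Mat(m[G:H], RH) such that A·(t₁I_m t₂I_m ⋯ t_{[G:H]}I_m) = (t₁I_m t₂I_m ⋯ t_{[G:H]}I_m)·L_T(A). -/
open Matrix
open scoped Kronecker

/-- A complex matrix representation is irreducible if its degree is positive and it has
no nontrivial invariant subspaces. -/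
def IsIrrep {G : Type*} [Group G] {n : ℕ} (ρ : G →* Matrix (Fin n) (Fin n) ℂ) : Prop :=
  0 < n ∧ ∀ W : Submodule ℂ (Fin n → ℂ),
    (∀ g : G, ∀ v ∈ W, (ρ g).mulVec v ∈ W) → W = ⊥ ∨ W = ⊤

/-- Equivalence of complex matrix representations. -/
def RepEquiv {G : Type*} [Group G] {n m : ℕ} (ρ : G →* Matrix (Fin n) (Fin n) ℂ)
    (σ : G →* Matrix (Fin m) (Fin m) ℂ) : Prop :=
  ∃ e : (Fin n → ℂ) ≃ₗ[ℂ] (Fin m → ℂ), ∀ g v, e ((ρ g).mulVec v) = (σ g).mulVec (e v)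

/-- `ρ` is a complete set of pairwise inequivalent irreducible complex matrix
representations of `G`. -/
def CompleteIrrepFamily (G : Type*) [Group G] {ι : Type*} (d : ι → ℕ)
    (ρ : ∀ i, G →* Matrix (Fin (d i)) (Fin (d i)) ℂ) : Prop :=
  (∀ i, IsIrrep (ρ i)) ∧
  (∀ i j, i ≠ j → ¬ RepEquiv (ρ i) (ρ j)) ∧
  (∀ (n : ℕ) (σ : G →* Matrix (Fin n) (Fin n) ℂ), IsIrrep σ → ∃ i, RepEquiv σ (ρ i))

/-- The group determinant `Θ(G) = det (x_{g h⁻¹})_{g,h}`. -/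
noncomputable def groupDet (G : Type*) [Group G] [Fintype G] [DecidableEq G] :
    MvPolynomial G ℂ :=
  Matrix.det (Matrix.of fun g h : G => MvPolynomial.X (g * h⁻¹))

/-!
`R[G]` is a free right `R[H]`-module on the coset representatives: for `y : ι → R[H]`, the
coefficient of `g` in `∑ i, tᵢ · yᵢ` is the coefficient of `tᵢ⁻¹ g` in `yᵢ`, for the unique `i`
with `tᵢ⁻¹ g ∈ H`. Applied entrywise, every matrix `C` over `R[G]` factors uniquely as
`(t₁ I ⋯ t_k I) · B` with `B` over `R[H]`; take `C = A · (t₁ I ⋯ t_k I)`.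
-/

open MonoidAlgebra

section
variable {R : Type*} [CommSemiring R] {G : Type*} [Group G] {H : Subgroup G}

theorem coeff_single_one_mul_mapDomain_subtype_of_mem {g x : G} (hx : g⁻¹ * x ∈ H)
    (z : MonoidAlgebra R H) :
    (single g (1 : R) * mapDomainAlgHom R R H.subtype z).coeff x = z.coeff ⟨g⁻¹ * x, hx⟩ := by
  rw [coeff_single_mul_apply, one_mul, mapDomainAlgHom_apply, coeff_mapDomain]
  exact Finsupp.mapDomain_apply Subtype.val_injective z.coeff ⟨g⁻¹ * x, hx⟩

theorem coeff_single_one_mul_mapDomain_subtype_of_notMem {g x : G} (hx : g⁻¹ * x ∉ H)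
    (z : MonoidAlgebra R H) :
    (single g (1 : R) * mapDomainAlgHom R R H.subtype z).coeff x = 0 := by
  rw [coeff_single_mul_apply, one_mul, mapDomainAlgHom_apply, coeff_mapDomain,
    Finsupp.mapDomain_of_notMem_range]
  rintro ⟨h, hh⟩
  exact hx (hh ▸ h.2)

variable {ι : Type*} [Fintype ι] {t : ι → G}

theorem coeff_sum_single_one_mul_mapDomain_subtype
    (ht : ∀ g : G, ∃! i : ι, (t i)⁻¹ * g ∈ H) (y : ι → MonoidAlgebra R H) {i : ι} {x : G}
    (hx : (t i)⁻¹ * x ∈ H) :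
    (∑ j, single (t j) (1 : R) * mapDomainAlgHom R R H.subtype (y j)).coeff x =
      (y i).coeff ⟨(t i)⁻¹ * x, hx⟩ := by
  rw [coeff_sum, Finsupp.finsetSum_apply, Finset.sum_eq_single i,
    coeff_single_one_mul_mapDomain_subtype_of_mem hx]
  · intro j _ hji
    exact coeff_single_one_mul_mapDomain_subtype_of_notMem
      (fun hj => hji ((ht x).unique hj hx)) _
  · exact fun hi => absurd (Finset.mem_univ i) hi

theorem bijective_sum_single_one_mul_mapDomain_subtype
    (ht : ∀ g : G, ∃! i : ι, (t i)⁻¹ * g ∈ H) :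
    Function.Bijective fun y : ι → MonoidAlgebra R H =>
      ∑ i, single (t i) (1 : R) * mapDomainAlgHom R R H.subtype (y i) := by
  have hmem (i : ι) (h : H) : (t i)⁻¹ * (t i * h) ∈ H := by simp
  refine ⟨fun y y' hyy' => funext fun i => ?_, fun x => ?_⟩
  · ext h
    have hcoeff := congr_arg (fun z => z.coeff (t i * h)) hyy'
    simp only [coeff_sum_single_one_mul_mapDomain_subtype ht _ (hmem i h),
      inv_mul_cancel_left] at hcoeff
    exact hcoeff
  · refine ⟨fun i => comapDomain (fun h : H => t i * h)
      ((mul_right_injective (t i)).comp Subtype.val_injective) x, ?_⟩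
    ext g
    obtain ⟨i, hi, -⟩ := ht g
    rw [coeff_sum_single_one_mul_mapDomain_subtype ht _ hi, coeff_comapDomain,
      Finsupp.comapDomain_apply, mul_inv_cancel_left]

end

theorem existsUnique_matrix_of_bijective {ι n p α β : Type*} {f : (ι → α) → β}
    (hf : f.Bijective) (C : Matrix n p β) :
    ∃! B : Matrix (ι × n) p α, ∀ a q, C a q = f fun i => B (i, a) q := by
  refine ⟨of fun x q => Function.surjInv hf.2 (C x.2 q) x.1,
    fun a q => (Function.surjInv_eq hf.2 _).symm, fun B hB => ?_⟩
  ext ⟨i, a⟩ q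
  exact congr_fun (hf.1 ((hB a q).symm.trans (Function.surjInv_eq hf.2 _).symm)) i

section
variable {R : Type*} [CommSemiring R] {G : Type*} [Group G] {ι : Type*}

variable (R) in
noncomputable def cosetRow (t : ι → G) (n : Type*) [DecidableEq n] :
    Matrix n (ι × n) (MonoidAlgebra R G) :=
  of fun a q => if a = q.2 then single (t q.1) (1 : R) else 0

variable [Fintype ι] {n p : Type*} [Fintype n] [DecidableEq n]

theorem cosetRow_mul_apply (t : ι → G) (B : Matrix (ι × n) p (MonoidAlgebra R G)) (a : n)
    (q : p) : (cosetRow R t n * B) a q = ∑ i, single (t i) (1 : R) * B (i, a) q := by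
  simp [cosetRow, Matrix.mul_apply, Fintype.sum_prod_type, ite_mul]

theorem existsUnique_eq_cosetRow_mul_map {H : Subgroup G} {t : ι → G}
    (ht : ∀ g : G, ∃! i : ι, (t i)⁻¹ * g ∈ H) (C : Matrix n p (MonoidAlgebra R G)) :
    ∃! B : Matrix (ι × n) p (MonoidAlgebra R H),
      C = cosetRow R t n * B.map (mapDomainAlgHom R R H.subtype) := by
  simpa only [← Matrix.ext_iff, cosetRow_mul_apply, map_apply] using
    existsUnique_matrix_of_bijective (bijective_sum_single_one_mul_mapDomain_subtype ht) C

end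

/-- Existence and uniqueness of the left regular representation matrix `L_T(A)`:
`A · (t₁ I_m ⋯ t_k I_m) = (t₁ I_m ⋯ t_k I_m) · L_T(A)`. -/
theorem leftRegular_exists_unique (R : Type*) [CommRing R] (G : Type*) [Group G]
    (H : Subgroup G) (m k : ℕ) (t : Fin k → G)
    (ht : ∀ g : G, ∃! i : Fin k, (t i)⁻¹ * g ∈ H)
    (A : Matrix (Fin m) (Fin m) (MonoidAlgebra R G)) :
    ∃! B : Matrix (Fin k × Fin m) (Fin k × Fin m) (MonoidAlgebra R H),
      A * (Matrix.of fun (a : Fin m) (p : Fin k × Fin m) =>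
          if a = p.2 then MonoidAlgebra.single (t p.1) (1 : R) else 0)
        = (Matrix.of fun (a : Fin m) (p : Fin k × Fin m) =>
            if a = p.2 then MonoidAlgebra.single (t p.1) (1 : R) else 0)
          * B.map (MonoidAlgebra.mapDomainAlgHom R R H.subtype) :=
  existsUnique_eq_cosetRow_mul_map ht (A * cosetRow R t (Fin m))
end

section
/- Let H be a normal subgroup of finite index in G with left coset representatives T, let L_T : Mat(m, RG) → Mat(m[G:H], RH) be the left regular representation, let L_{G/H} be the left regular representation of the quotient G/H (with respect to G/H itself as representatives), and write A = ∑_{t∈T} t A_t with A_t ∈ Mat(m, RH). Then L_T(A) = P⁻¹ (∑_{t∈T} L_{G/H}(tH) ⊗ t A_t) P, where P is the block diagonal matrix with blocks t₁I_m,…,t_{[G:H]}I_m and ⊗ denotes the Kronecker product. -/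
open Matrix
open scoped Kronecker

/-!
Multiply the `(a, (j, b))` entry of `A X = X B` (with `X = (t₁I_m ⋯ t_kI_m)`) on the left by
`t_l⁻¹` and keep only the coefficients lying in `H`. Since the `t_i` lie in distinct cosets,
on the right only `B_{(l,a),(j,b)}` survives. On the left, the `i`-th summand is
`(t_l⁻¹ t_i t_j) · (t_j⁻¹ (A_i)_{ab} t_j)`, whose second factor lies in `RH` because `H` is normal,
so it survives exactly when `t_l⁻¹ t_i t_j ∈ H`, i.e. when `L_{G/H}(t_iH)_{lj} = 1`.
-/

namespace MonoidAlgebra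

variable {R G : Type*} [Semiring R]

lemma mapDomain_mem_supported_range {M : Type*} (f : M → G) (y : R[M]) :
    mapDomain f y ∈ supported R R (Set.range f) :=
  mem_supported'.2 fun _ hg => Finsupp.mapDomain_of_notMem_range _ _ hg

variable [Group G] (H : Subgroup G)

lemma single_inv_mul_mul_single_mem_supported [H.Normal] {x : R[G]}
    (hx : x ∈ supported R R (H : Set G)) (g : G) (r s : R) :
    single g⁻¹ r * x * single g s ∈ supported R R (H : Set G) := by
  refine mem_supported'.2 fun h hh => ?_
  have hconj : g * (h * g⁻¹) ∉ H := fun hmem =>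
    hh (by simpa [mul_assoc] using ‹H.Normal›.conj_mem _ hmem g⁻¹)
  rw [coeff_mul_single_apply, coeff_single_mul_apply, inv_inv,
    mem_supported'.1 hx _ hconj, mul_zero, zero_mul]

variable [DecidablePred (· ∈ H)]

noncomputable def subgroupProj : R[G] →+ R[G] :=
  coeffAddEquiv.symm.toAddMonoidHom.comp
    ((Finsupp.filterAddHom (· ∈ H)).comp coeffAddEquiv.toAddMonoidHom)

lemma coeff_subgroupProj (x : R[G]) (g : G) :
    (subgroupProj H x).coeff g = if g ∈ H then x.coeff g else 0 := rfl

lemma subgroupProj_single_mul {x : R[G]} (hx : x ∈ supported R R (H : Set G)) (g : G) (r : R) :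
    subgroupProj H (single g r * x) = if g ∈ H then single g r * x else 0 := by
  have hx' := mem_supported'.1 hx
  split_ifs with hg <;> ext h <;>
    simp only [coeff_subgroupProj, coeff_single_mul_apply, coeff_zero, Finsupp.coe_zero,
      Pi.zero_apply]
  · split_ifs with hh
    · rfl
    · rw [hx' _ fun hmem => hh (by simpa using H.mul_mem hg hmem), mul_zero]
  · split_ifs with hh
    · rw [hx' _ fun hmem => hg (by simpa using H.mul_mem hh (H.inv_mem hmem)), mul_zero]
    · rfl

lemma eq_of_sum_single_mul_eq_sum_single_mul [H.Normal] {ι : Type*} [Fintype ι]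
    {t : ι → G} (ht : Function.Injective fun i => (t i : G ⧸ H)) {y z : ι → R[G]}
    (hy : ∀ i, y i ∈ supported R R (H : Set G)) (hz : ∀ i, z i ∈ supported R R (H : Set G))
    (s : G) (h : (∑ i, single (t i) 1 * z i) * single s 1 = ∑ i, single (t i) 1 * y i) (l : ι) :
    y l = single (t l)⁻¹ 1 *
      (∑ i, if (t l)⁻¹ * (t i * s) ∈ H then single (t i) 1 * z i else 0) * single s 1 := by
  classical
  have hcoset : ∀ i, (t l)⁻¹ * t i ∈ H ↔ l = i := fun i =>
    QuotientGroup.eq.symm.trans ht.eq_iff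
  calc y l = subgroupProj H (single (t l)⁻¹ 1 * ∑ i, single (t i) 1 * y i) := by
        simp only [Finset.mul_sum, ← mul_assoc, single_mul_single, mul_one, map_sum,
          subgroupProj_single_mul H (hy _), hcoset, Finset.sum_ite_eq, Finset.mem_univ, if_true,
          inv_mul_cancel, ← one_def, one_mul]
    _ = subgroupProj H (single (t l)⁻¹ 1 * ((∑ i, single (t i) 1 * z i) * single s 1)) := by
        rw [h]
    _ = ∑ i, subgroupProj H
          (single ((t l)⁻¹ * (t i * s)) 1 * (single s⁻¹ 1 * z i * single s 1)) := by
        simp only [Finset.sum_mul, Finset.mul_sum, map_sum, ← mul_assoc, single_mul_single,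
          mul_one, mul_inv_cancel_right]
    _ = _ := by
        simp only [Finset.mul_sum, Finset.sum_mul]
        refine Finset.sum_congr rfl fun i _ => ?_
        rw [subgroupProj_single_mul H (single_inv_mul_mul_single_mem_supported H (hz i) _ _ _)]
        split_ifs
        · simp only [← mul_assoc, single_mul_single, mul_one, mul_inv_cancel_right]
        · simp

end MonoidAlgebra

/-- For a normal subgroup `H`, `L_T(A) = P⁻¹ (∑_{t ∈ T} L_{G/H}(tH) ⊗ t A_t) P`. -/
theorem leftRegular_normal_kronecker (R : Type*) [CommRing R] (G : Type*) [Group G]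
    (H : Subgroup G) [H.Normal] [DecidablePred (· ∈ H)] (m k : ℕ) (t : Fin k → G)
    (ht : ∀ g : G, ∃! i : Fin k, (t i)⁻¹ * g ∈ H)
    (A : Matrix (Fin m) (Fin m) (MonoidAlgebra R G))
    (At : Fin k → Matrix (Fin m) (Fin m) (MonoidAlgebra R H))
    (hA : ∀ a b, A a b = ∑ i : Fin k,
      MonoidAlgebra.single (t i) (1 : R) *
        MonoidAlgebra.mapDomainAlgHom R R H.subtype ((At i) a b))
    (B : Matrix (Fin k × Fin m) (Fin k × Fin m) (MonoidAlgebra R H))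
    (hB : A * (Matrix.of fun (a : Fin m) (p : Fin k × Fin m) =>
            if a = p.2 then MonoidAlgebra.single (t p.1) (1 : R) else 0)
          = (Matrix.of fun (a : Fin m) (p : Fin k × Fin m) =>
              if a = p.2 then MonoidAlgebra.single (t p.1) (1 : R) else 0)
            * B.map (MonoidAlgebra.mapDomainAlgHom R R H.subtype)) :
    B.map (MonoidAlgebra.mapDomainAlgHom R R H.subtype)
      = (Matrix.of fun (p q : Fin k × Fin m) =>
          if p = q then MonoidAlgebra.single (t p.1)⁻¹ (1 : R) else 0)
        * (∑ i : Fin k,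
            ((Matrix.of fun p q : Fin k =>
                if (t p)⁻¹ * (t i * t q) ∈ H then (1 : R) else 0).map
              (algebraMap R (MonoidAlgebra R G)))
            ⊗ₖ ((At i).map fun x =>
                MonoidAlgebra.single (t i) (1 : R) *
                  MonoidAlgebra.mapDomainAlgHom R R H.subtype x))
        * (Matrix.of fun (p q : Fin k × Fin m) =>
            if p = q then MonoidAlgebra.single (t p.1) (1 : R) else 0) := by
  have hcoset : Function.Injective fun i => (t i : G ⧸ H) := fun i l hil =>
    (ht (t i)).unique (by simp) (QuotientGroup.eq.1 hil.symm)
  have hsupp : ∀ y : MonoidAlgebra R H, MonoidAlgebra.mapDomainAlgHom R R H.subtype y ∈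
      MonoidAlgebra.supported R R (H : Set G) := fun y => by
    simpa using MonoidAlgebra.mapDomain_mem_supported_range H.subtype y
  refine Matrix.ext fun ⟨l, a⟩ ⟨j, b⟩ => ?_
  have hBab := congrFun (congrFun hB a) (j, b)
  simp only [mul_apply, of_apply, map_apply, Fintype.sum_prod_type, mul_ite, ite_mul, mul_zero,
    zero_mul, Finset.sum_ite_eq', Finset.sum_ite_eq, Finset.mem_univ, if_true, hA] at hBab
  simp only [show ∀ d : Fin k × Fin m → MonoidAlgebra R G,
    (of fun p q => if p = q then d p else 0) = diagonal d from fun _ => rfl]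
  rw [mul_diagonal, diagonal_mul]
  simp only [Matrix.sum_apply, kroneckerMap_apply, map_apply, of_apply,
    apply_ite (algebraMap _ _), map_one, map_zero, ite_mul, one_mul, zero_mul]
  exact MonoidAlgebra.eq_of_sum_single_mul_eq_sum_single_mul H hcoset (fun _ => hsupp _)
    (fun _ => hsupp _) (t j) hBab l
end

section
/- Let K ⊆ H ⊆ G be a chain of groups with [G:H] and [H:K] finite, T a complete set of left coset representatives of H in G, and U a complete set of left coset representatives of K in H. Then the set V = {tu : t ∈ T, u ∈ U} is a complete set of left coset representatives of K in G, and the composition L_U ∘ L_T : Mat(m, RG) → Mat(m[G:K], RK) equals the left regular representation L_V with respect to V. -/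
open Matrix
open scoped Kronecker

/-! The coset `g K` is found in two steps: `t i` is the representative of `g H`, and `u j` that
of `t i⁻¹ g` in `H ⧸ K`. On the matrix side, the block row `(t i * u j) I` defining `L_V` factors
as `(t I) * (u I)`, with the second factor pushed from `RH` into `RG`, so the defining relations
of `L_T` and `L_U` chain together. -/

open MonoidAlgebra

theorem Subgroup.existsUnique_inv_mul_mem_of_transversals {G : Type*} [Group G]
    {H K : Subgroup G} (hKH : K ≤ H) {ι κ : Type*} {t : ι → G}
    (ht : ∀ g : G, ∃! i, (t i)⁻¹ * g ∈ H) {u : κ → H}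
    (hu : ∀ h : H, ∃! j, (u j)⁻¹ * h ∈ K.subgroupOf H) (g : G) :
    ∃! p : κ × ι, (t p.2 * (u p.1 : G))⁻¹ * g ∈ K := by
  have inv_mul_eq : ∀ i j, (t i * (u j : G))⁻¹ * g = (u j : G)⁻¹ * ((t i)⁻¹ * g) := by
    simp [mul_assoc]
  obtain ⟨i, hi, hi_uniq⟩ := ht g
  obtain ⟨j, hj, hj_uniq⟩ := hu ⟨(t i)⁻¹ * g, hi⟩
  refine ⟨(j, i), by dsimp only; rw [inv_mul_eq]; exact hj, ?_⟩
  rintro ⟨j', i'⟩ hK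
  rw [inv_mul_eq] at hK
  obtain rfl : i' = i := hi_uniq i' (by simpa using H.mul_mem (u j').2 (hKH hK))
  obtain rfl : j' = j := hj_uniq j' (by simpa [Subgroup.mem_subgroupOf] using hK)
  rfl

theorem Matrix.intertwining_comp {m n o α β γ F : Type*} [Fintype m] [Fintype n] [Fintype o]
    [Semiring α] [Semiring β] [FunLike F β α] [RingHomClass F β α] (φ : F) (ψ : γ → β)
    {A : Matrix m m α} {P : Matrix m n α} {B : Matrix n n β} {Q : Matrix n o β}
    {C : Matrix o o γ} (hB : A * P = P * B.map φ) (hC : B * Q = Q * C.map ψ) :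
    A * (P * Q.map φ) = (P * Q.map φ) * C.map (φ ∘ ψ) := by
  calc A * (P * Q.map φ) = P * (B * Q).map φ := by
        rw [← Matrix.mul_assoc, hB, Matrix.map_mul, Matrix.mul_assoc]
    _ = (P * Q.map φ) * C.map (φ ∘ ψ) := by
        rw [hC, Matrix.map_mul, Matrix.map_map, Matrix.mul_assoc]

/-- The block row `(t₁ I ⋯ t_k I)` of the left regular representation `L_T`. -/
noncomputable def repBlockRow (R : Type*) [Semiring R] {G ι n : Type*} [DecidableEq n]
    (t : ι → G) : Matrix n (ι × n) (MonoidAlgebra R G) :=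
  Matrix.of fun a p => if a = p.2 then single (t p.1) 1 else 0

theorem repBlockRow_mul_map_repBlockRow (R : Type*) [CommSemiring R] {G H ι κ n : Type*}
    [Monoid G] [Monoid H] [Fintype ι] [Fintype n] [DecidableEq ι] [DecidableEq n] (f : H →* G)
    (t : ι → G) (u : κ → H) :
    repBlockRow R (n := n) t * (repBlockRow R (n := ι × n) u).map (mapDomainAlgHom R R f) =
      Matrix.of fun a q => if a = q.2.2 then single (t q.2.1 * f (u q.1)) 1 else 0 := by
  refine Matrix.ext fun a ⟨j, i, b⟩ => ?_
  rw [Matrix.mul_apply, Fintype.sum_eq_single (i, b)]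
  · by_cases hab : a = b <;> simp [repBlockRow, hab, mapDomain_single]
  · intro p hp
    simp [repBlockRow, hp]

/-- For a chain `K ⊆ H ⊆ G`, the products `t u` of coset representatives form a complete
set of left coset representatives of `K` in `G`, and `L_U ∘ L_T = L_V`. -/
theorem leftRegular_comp (R : Type*) [CommRing R] (G : Type*) [Group G]
    (H K : Subgroup G) (hKH : K ≤ H) (m k l : ℕ)
    (t : Fin k → G) (ht : ∀ g : G, ∃! i : Fin k, (t i)⁻¹ * g ∈ H)
    (u : Fin l → H) (hu : ∀ h : H, ∃! j : Fin l, (u j)⁻¹ * h ∈ K.subgroupOf H)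
    (A : Matrix (Fin m) (Fin m) (MonoidAlgebra R G))
    (B : Matrix (Fin k × Fin m) (Fin k × Fin m) (MonoidAlgebra R H))
    (C : Matrix (Fin l × (Fin k × Fin m)) (Fin l × (Fin k × Fin m))
          (MonoidAlgebra R (K.subgroupOf H)))
    (hB : A * (Matrix.of fun (a : Fin m) (p : Fin k × Fin m) =>
            if a = p.2 then MonoidAlgebra.single (t p.1) (1 : R) else 0)
          = (Matrix.of fun (a : Fin m) (p : Fin k × Fin m) =>
              if a = p.2 then MonoidAlgebra.single (t p.1) (1 : R) else 0)
            * B.map (MonoidAlgebra.mapDomainAlgHom R R H.subtype))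
    (hC : B * (Matrix.of fun (p : Fin k × Fin m) (q : Fin l × (Fin k × Fin m)) =>
            if p = q.2 then MonoidAlgebra.single (u q.1) (1 : R) else 0)
          = (Matrix.of fun (p : Fin k × Fin m) (q : Fin l × (Fin k × Fin m)) =>
              if p = q.2 then MonoidAlgebra.single (u q.1) (1 : R) else 0)
            * C.map (MonoidAlgebra.mapDomainAlgHom R R (K.subgroupOf H).subtype)) :
    (∀ g : G, ∃! p : Fin l × Fin k, (t p.2 * (u p.1 : G))⁻¹ * g ∈ K) ∧
    A * (Matrix.of fun (a : Fin m) (q : Fin l × (Fin k × Fin m)) =>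
          if a = q.2.2 then MonoidAlgebra.single (t q.2.1 * (u q.1 : G)) (1 : R) else 0)
      = (Matrix.of fun (a : Fin m) (q : Fin l × (Fin k × Fin m)) =>
          if a = q.2.2 then MonoidAlgebra.single (t q.2.1 * (u q.1 : G)) (1 : R) else 0)
        * C.map (MonoidAlgebra.mapDomainAlgHom R R
            (H.subtype.comp (K.subgroupOf H).subtype)) := by
  refine ⟨Subgroup.existsUnique_inv_mul_mem_of_transversals hKH ht hu, ?_⟩
  have h := Matrix.intertwining_comp (P := repBlockRow R t) (Q := repBlockRow R u)
    (mapDomainAlgHom R R H.subtype) (mapDomainAlgHom R R (K.subgroupOf H).subtype) hB hC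
  rwa [repBlockRow_mul_map_repBlockRow, ← AlgHom.coe_comp, ← mapDomainAlgHom_comp] at h
end

section
/- Let G be a finite group and H a normal subgroup. Then for every irreducible complex representation φ of G and every irreducible constituent ψ of the restriction of φ to H, deg φ ≤ [G:H] · deg ψ. -/
open Matrix
open scoped Kronecker

/-- For `H` normal in a finite group `G`, an irreducible `φ` of `G`, and an irreducible
constituent `ψ` of the restriction of `φ` to `H`, `deg φ ≤ [G:H] · deg ψ`. -/
theorem degree_le_index_mul_constituent (G : Type*) [Group G] [Fintype G]
    (H : Subgroup G) [H.Normal]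
    {n e : ℕ} (φ : G →* Matrix (Fin n) (Fin n) ℂ) (hφ : IsIrrep φ)
    (ψ : H →* Matrix (Fin e) (Fin e) ℂ) (hψ : IsIrrep ψ)
    (f : (Fin e → ℂ) →ₗ[ℂ] (Fin n → ℂ)) (hf : Function.Injective f)
    (hconst : ∀ (h : H) (v : Fin e → ℂ),
      f ((ψ h).mulVec v) = (φ (h : G)).mulVec (f v)) :
    n ≤ H.index * e := by
  classical
  haveI : Fintype (G ⧸ H) := Fintype.ofFinite _
  -- the linear map whose range is the span of all translates of the image of f
  set F : ((G ⧸ H) → (Fin e → ℂ)) →ₗ[ℂ] (Fin n → ℂ) :=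
    { toFun := fun c => ∑ x : G ⧸ H, (φ (Quotient.out x)).mulVec (f (c x))
      map_add' := by
        intro a b
        simp [Matrix.mulVec_add, Finset.sum_add_distrib]
      map_smul' := by
        intro a b
        simp [Matrix.mulVec_smul, Finset.smul_sum] } with hF
  set W : Submodule ℂ (Fin n → ℂ) := LinearMap.range F with hWdef
  have key : ∀ (g : G) (u : Fin e → ℂ), (φ g).mulVec (f u) ∈ W := by
    intro g u
    set x : G ⧸ H := QuotientGroup.mk g with hx
    have hmem : (Quotient.out x)⁻¹ * g ∈ H :=
      QuotientGroup.eq.mp (by rw [QuotientGroup.out_eq', hx])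
    set h : H := ⟨(Quotient.out x)⁻¹ * g, hmem⟩ with hh
    have hg : g = Quotient.out x * (h : G) := by
      simp [hh]
    set c : (G ⧸ H) → (Fin e → ℂ) := Pi.single x ((ψ h).mulVec u) with hc
    refine ⟨c, ?_⟩
    have hzero : ∀ y : G ⧸ H, y ≠ x → (φ (Quotient.out y)).mulVec (f (c y)) = 0 := by
      intro y hy
      simp [hc, Pi.single_eq_of_ne hy]
    calc F c
        = (φ (Quotient.out x)).mulVec (f (c x)) := by
          simp only [hF, LinearMap.coe_mk, AddHom.coe_mk]
          exact Finset.sum_eq_single x (fun y _ hy => hzero y hy) (by simp)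
      _ = (φ g).mulVec (f u) := by
          rw [hc, Pi.single_eq_same, hconst, Matrix.mulVec_mulVec,
            ← _root_.map_mul, ← hg]
  have hinv : ∀ g : G, ∀ w ∈ W, (φ g).mulVec w ∈ W := by
    rintro g w ⟨c, rfl⟩
    have : (φ g).mulVec (F c) =
        ∑ x : G ⧸ H, (φ (g * Quotient.out x)).mulVec (f (c x)) := by
      have hsum : ∀ (A : Matrix (Fin n) (Fin n) ℂ) (v : G ⧸ H → Fin n → ℂ),
          A.mulVec (∑ x : G ⧸ H, v x) = ∑ x : G ⧸ H, A.mulVec (v x) := by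
        intro A v
        simpa only [Matrix.mulVecLin_apply] using map_sum A.mulVecLin v Finset.univ
      simp only [hF, LinearMap.coe_mk, AddHom.coe_mk, hsum,
        Matrix.mulVec_mulVec, ← _root_.map_mul]
    rw [this]
    exact Submodule.sum_mem _ fun x _ => key _ _
  have hne : W ≠ ⊥ := by
    intro hbot
    have hv : (Pi.single (⟨0, hψ.1⟩ : Fin e) (1:ℂ) : Fin e → ℂ) ≠ 0 := by
      intro h0
      have := congrFun h0 ⟨0, hψ.1⟩
      simp at this
    have hfv : f (Pi.single (⟨0, hψ.1⟩ : Fin e) (1:ℂ)) ≠ 0 := by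
      intro h0
      exact hv (hf (by simpa using h0))
    have : f (Pi.single (⟨0, hψ.1⟩ : Fin e) (1:ℂ)) ∈ W := by
      have := key 1 (Pi.single (⟨0, hψ.1⟩ : Fin e) (1:ℂ))
      simpa using this
    rw [hbot] at this
    exact hfv (by simpa using this)
  have hW : W = ⊤ := (hφ.2 W hinv).resolve_left hne
  have h1 : Module.finrank ℂ (Fin n → ℂ) = n := Module.finrank_fin_fun ℂ
  have h2 : Module.finrank ℂ ((G ⧸ H) → (Fin e → ℂ)) = H.index * e := by
    rw [Module.finrank_pi_fintype]
    simp [Module.finrank_fin_fun, Subgroup.index, Nat.card_eq_fintype_card,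
      Finset.sum_const, Finset.card_univ]
  have h3 := LinearMap.finrank_range_le F
  rw [← hWdef, hW] at h3
  rw [finrank_top, h1, h2] at h3
  exact h3
end
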